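/- Let f₁,...,f_M : ℝ → ℝ be contractions with common constant α < 1, let P ≤ M be a positive integer, and set n̄ = 1 + (n mod P). Then every solution of x_n = ½(max_{1≤i≤M}{f_i(x_{n-i})} − n̄-rank_{1≤i≤M}{f_i(x_{n-i})}) converges to a unique P-periodic orbit independent of the initial condition. -/

import Mathlib

/-!
Every `k`-rank is monotone and commutes with adding a constant, hence is `1`-Lipschitz for the
sup distance. So the right-hand side of the recurrence is an `α`-contraction of the window
`(x (n-1), …, x (n-M))`, and any two solutions approach each other like `α ^ (n / M)`. The
right-hand side depends on `n` only through `n % P`, so the same contraction acting on functions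
`ZMod P → ℝ` has a fixed point, which is a `P`-periodic solution. It attracts every solution, and
a periodic sequence asymptotic to it coincides with it.
-/

/-- The `k`-rank of a vector: its `k`-th largest entry (1-indexed, with multiplicity). -/
noncomputable def krank (M k : ℕ) (v : Fin M → ℝ) : ℝ :=
  ((List.ofFn v).insertionSort (· ≥ ·)).getD (k - 1) 0

open Filter Function Topology NNReal

namespace List

theorem length_insertionSort_ofFn {α : Type*} {r : α → α → Prop} [DecidableRel r] {M : ℕ}
    (v : Fin M → α) : ((ofFn v).insertionSort r).length = M := by
  rw [length_insertionSort, length_ofFn]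

variable {α : Type*} [LinearOrder α]

/-- In a list sorted in decreasing order, the entries exceeding `t` form a prefix. -/
theorem SortedGE.lt_countP_iff {l : List α} (hl : l.SortedGE) {j : ℕ} (hj : j < l.length)
    (t : α) : j < l.countP (t < ·) ↔ t < l[j] := by
  have hanti {a b : ℕ} (ha : a < l.length) (hb : b < l.length) (hab : a ≤ b) : l[b] ≤ l[a] :=
    hl.antitone_get (a := ⟨a, ha⟩) (b := ⟨b, hb⟩) hab
  constructor
  · intro hcount
    by_contra! htj
    have hdrop : (l.drop j).countP (t < ·) = 0 := by
      rw [countP_eq_zero]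
      intro a ha
      obtain ⟨i, hi, rfl⟩ := mem_drop_iff_getElem.mp ha
      simpa using (hanti hj _ (Nat.le_add_right j i)).trans htj
    have htake : (l.take j).countP (t < ·) ≤ j :=
      countP_le_length.trans (length_take_le j l)
    rw [← take_append_drop j l, countP_append, hdrop] at hcount
    omega
  · intro htj
    have htake : (l.take (j + 1)).countP (t < ·) = j + 1 := by
      rw [countP_eq_length.mpr, length_take_of_le hj]
      intro a ha
      obtain ⟨i, hi, rfl⟩ := mem_take_iff_getElem.mp ha
      simpa using htj.trans_le (hanti _ hj (by omega))
    have := (take_sublist (j + 1) l).countP_le (p := (t < ·))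
    omega

end List

protected theorem LipschitzWith.piMap {ι : Type*} [Fintype ι] {α β : ι → Type*}
    [∀ i, PseudoEMetricSpace (α i)] [∀ i, PseudoEMetricSpace (β i)] {K : ℝ≥0}
    {f : ∀ i, α i → β i} (hf : ∀ i, LipschitzWith K (f i)) : LipschitzWith K (Pi.map f) :=
  fun x y => edist_pi_le_iff.mpr fun i =>
    (hf i (x i) (y i)).trans (by gcongr; exact edist_le_pi_edist x y i)

theorem LipschitzWith.half_sub {α : Type*} [PseudoEMetricSpace α] {K : ℝ≥0} {f g : α → ℝ}
    (hf : LipschitzWith K f) (hg : LipschitzWith K g) :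
    LipschitzWith K fun x => (1 / 2 : ℝ) * (f x - g x) := by
  have h := (lipschitzWith_smul (1 / 2 : ℝ)).comp (hf.sub hg)
  have hK : ‖(1 / 2 : ℝ)‖₊ * (K + K) = K := by
    ext
    simp only [one_div, nnnorm_inv, Real.nnnorm_ofNat, NNReal.coe_mul, NNReal.coe_inv,
      NNReal.coe_ofNat, NNReal.coe_add]
    ring
  exact hK ▸ h

theorem Function.Periodic.eq_of_tendsto {X : Type*} [TopologicalSpace X] [T2Space X]
    {g : ℕ → X} {P : ℕ} (hg : Periodic g P) (hP : 0 < P) {a : X}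
    (h : Tendsto g atTop (𝓝 a)) (n : ℕ) : g n = a := by
  have hshift : Tendsto (fun k : ℕ => n + k * P) atTop atTop :=
    tendsto_atTop_mono (fun k => le_add_left (Nat.le_mul_of_pos_right k hP)) tendsto_id
  have hconst : g ∘ (fun k : ℕ => n + k * P) = fun _ => g n := funext fun k => hg.nat_mul k n
  exact tendsto_nhds_unique (hconst ▸ tendsto_const_nhds) (h.comp hshift)

open List

theorem krank_eq_zero_of_le {M k : ℕ} (hk : M ≤ k - 1) (v : Fin M → ℝ) : krank M k v = 0 :=
  getD_eq_default _ _ ((length_insertionSort_ofFn v).trans_le hk)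

theorem krank_le_iff {M k : ℕ} (hk : k - 1 < M) (v : Fin M → ℝ) (t : ℝ) :
    krank M k v ≤ t ↔ (ofFn v).countP (t < ·) ≤ k - 1 := by
  have hj : k - 1 < ((ofFn v).insertionSort (· ≥ ·)).length := by
    rwa [length_insertionSort_ofFn]
  rw [krank, getD_eq_getElem _ _ hj, ← not_lt, ← sortedGE_insertionSort.lt_countP_iff hj,
    (perm_insertionSort _ _).countP_eq, not_lt]

theorem krank_mono (M k : ℕ) : Monotone (krank M k) := by
  intro v w hvw
  rcases lt_or_ge (k - 1) M with hk | hk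
  · rw [krank_le_iff hk]
    refine le_trans ?_ ((krank_le_iff hk w _).mp le_rfl)
    simp only [ofFn_eq_map, countP_map]
    exact countP_mono_left fun i _ h => by simpa using (of_decide_eq_true h).trans_le (hvw i)
  · rw [krank_eq_zero_of_le hk, krank_eq_zero_of_le hk]

theorem krank_add_const {M k : ℕ} (hk : k - 1 < M) (v : Fin M → ℝ) (c : ℝ) :
    krank M k (fun i => v i + c) = krank M k v + c := by
  have hsort : ((ofFn v).insertionSort (· ≥ ·)).map (· + c)
      = ((ofFn v).map (· + c)).insertionSort (· ≥ ·) :=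
    map_insertionSort _ _ _ _ fun a _ b _ => (add_le_add_iff_right c).symm
  have hj : k - 1 < ((ofFn v).insertionSort (· ≥ ·)).length := by
    rwa [length_insertionSort_ofFn]
  have hmap : ofFn (fun i => v i + c) = (ofFn v).map (· + c) := (map_ofFn (g := (· + c))).symm
  rw [krank, krank, hmap, ← hsort, getD_eq_getElem _ _ (by simpa using hj),
    getD_eq_getElem _ _ hj, getElem_map]

theorem krank_lipschitzWith (M k : ℕ) : LipschitzWith 1 (krank M k) := by
  rcases lt_or_ge (k - 1) M with hk | hk
  · refine LipschitzWith.of_le_add fun v w => ?_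
    calc krank M k v ≤ krank M k (fun i => w i + dist v w) :=
          krank_mono M k fun i => by
            linarith [(Real.sub_le_dist (v i) (w i)).trans (dist_le_pi_dist v w i)]
      _ = krank M k w + dist v w := krank_add_const hk w _
  · have : krank M k = fun _ => 0 := funext (krank_eq_zero_of_le hk)
    exact this ▸ LipschitzWith.const' 0

section Recurrence

variable {M P : ℕ} {K : ℝ≥0} {G : ℕ → (Fin M → ℝ) → ℝ}

def SolvesRecurrence (G : ℕ → (Fin M → ℝ) → ℝ) (x : ℕ → ℝ) : Prop :=
  ∀ n, M ≤ n → x n = G n fun i : Fin M => x (n - 1 - i)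

theorem SolvesRecurrence.dist_le {x y : ℕ → ℝ} (hx : SolvesRecurrence G x)
    (hy : SolvesRecurrence G y) (hG : ∀ n, LipschitzWith K (G n)) (hK : K ≤ 1) (hM : 0 < M)
    {C : ℝ} (hC : ∀ m < M, dist (x m) (y m) ≤ C) (n : ℕ) :
    dist (x n) (y n) ≤ C * K ^ (n / M) := by
  induction n using Nat.strong_induction_on with
  | _ n ih =>
    rcases lt_or_ge n M with hn | hn
    · simpa [Nat.div_eq_of_lt hn] using hC n hn
    have hC0 : 0 ≤ C := dist_nonneg.trans (hC 0 hM)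
    have hwindow : dist (fun i : Fin M => x (n - 1 - i)) (fun i : Fin M => y (n - 1 - i))
        ≤ C * K ^ ((n - M) / M) := by
      refine (dist_pi_le_iff (by positivity)).mpr fun i => (ih _ (by omega)).trans ?_
      exact mul_le_mul_of_nonneg_left
        (pow_le_pow_of_le_one K.2 hK (Nat.div_le_div_right (by omega))) hC0
    calc dist (x n) (y n) ≤ K * (C * K ^ ((n - M) / M)) := by
          rw [hx n hn, hy n hn]; exact (hG n).dist_le_mul_of_le hwindow
      _ = C * K ^ (n / M) := by rw [Nat.div_eq_sub_div hM hn, pow_succ]; ring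

theorem SolvesRecurrence.tendsto_sub {x y : ℕ → ℝ} (hx : SolvesRecurrence G x)
    (hy : SolvesRecurrence G y) (hG : ∀ n, LipschitzWith K (G n)) (hK : K < 1) (hM : 0 < M) :
    Tendsto (fun n => x n - y n) atTop (𝓝 0) := by
  set C := ∑ m ∈ Finset.range M, dist (x m) (y m)
  have hC : ∀ m < M, dist (x m) (y m) ≤ C := fun m hm =>
    Finset.single_le_sum (fun m _ => dist_nonneg) (Finset.mem_range.mpr hm)
  have hpow : Tendsto (fun n => C * (K : ℝ) ^ (n / M)) atTop (𝓝 0) := by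
    simpa using ((tendsto_pow_atTop_nhds_zero_of_lt_one K.2 hK).comp
      (Nat.tendsto_div_const_atTop hM.ne')).const_mul C
  exact squeeze_zero_norm (hx.dist_le hy hG hK.le hM hC) hpow

/-- A `P`-periodic sequence is encoded as a function on `ZMod P`; the fixed points of this map are
the periodic solutions of the recurrence. -/
def periodicStep (G : ℕ → (Fin M → ℝ) → ℝ) (P : ℕ) (u : ZMod P → ℝ) : ZMod P → ℝ :=
  fun j => G j.val fun i : Fin M => u (j - 1 - (i : ℕ))

theorem lipschitzWith_periodicStep [NeZero P] (hG : ∀ n, LipschitzWith K (G n)) :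
    LipschitzWith K (periodicStep G P) :=
  LipschitzWith.of_dist_le_mul fun u v => (dist_pi_le_iff (by positivity)).mpr fun j =>
    (hG j.val).dist_le_mul_of_le ((dist_pi_le_iff dist_nonneg).mpr fun _ => dist_le_pi_dist u v _)

theorem solvesRecurrence_of_isFixedPt (hGP : Periodic G P) {u : ZMod P → ℝ}
    (hu : IsFixedPt (periodicStep G P) u) : SolvesRecurrence G fun n => u n := by
  intro n hn
  conv_lhs => rw [← hu]
  simp only [periodicStep, ZMod.val_natCast, hGP.map_mod_nat]
  congr with i
  have := i.isLt
  rw [Nat.cast_sub (by omega), Nat.cast_sub (by omega), Nat.cast_one]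

theorem exists_periodic_solution [NeZero P] (hGP : Periodic G P)
    (hG : ∀ n, LipschitzWith K (G n)) (hK : K < 1) :
    ∃ xs, Periodic xs P ∧ SolvesRecurrence G xs := by
  have hstep : ContractingWith K (periodicStep G P) := ⟨hK, lipschitzWith_periodicStep hG⟩
  refine ⟨fun n => hstep.fixedPoint (periodicStep G P) n, fun n => by simp, ?_⟩
  exact solvesRecurrence_of_isFixedPt hGP hstep.fixedPoint_isFixedPt

theorem existsUnique_periodic_attractor [NeZero P] (hGP : Periodic G P)
    (hG : ∀ n, LipschitzWith K (G n)) (hK : K < 1) (hM : 0 < M) :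
    ∃! xs : ℕ → ℝ, Periodic xs P ∧
      ∀ x, SolvesRecurrence G x → Tendsto (fun n => x n - xs n) atTop (𝓝 0) := by
  obtain ⟨xs, hper, hsol⟩ := exists_periodic_solution hGP hG hK
  refine ⟨xs, ⟨hper, fun x hx => hx.tendsto_sub hsol hG hK hM⟩, ?_⟩
  rintro z ⟨hzper, hz⟩
  funext n
  exact (sub_eq_zero.mp ((hper.sub hzper).eq_of_tendsto (NeZero.pos P) (hz xs hsol) n)).symm

end Recurrence

theorem max_minus_rank_periodic (M P : ℕ) (hP : 1 ≤ P) (hPM : P ≤ M)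
    (α : ℝ) (hα : α < 1)
    (f : Fin M → ℝ → ℝ)
    (hcon : ∀ i (x y : ℝ), |f i x - f i y| ≤ α * |x - y|) :
    ∃! xs : ℕ → ℝ,
      (∀ n, xs (n + P) = xs n) ∧
      (∀ x : ℕ → ℝ,
        (∀ n, M ≤ n → x n = (1 / 2) *
          (krank M 1 (fun i : Fin M => f i (x (n - 1 - (i : ℕ)))) -
           krank M (1 + n % P) (fun i : Fin M => f i (x (n - 1 - (i : ℕ)))))) →
        Filter.Tendsto (fun n => x n - xs n) Filter.atTop (nhds 0)) := by
  have : NeZero P := ⟨by omega⟩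
  have hf : LipschitzWith α.toNNReal (Pi.map f) := LipschitzWith.piMap fun i =>
    LipschitzWith.of_dist_le_mul fun x y => by
      simpa only [Real.dist_eq] using (hcon i x y).trans
        (mul_le_mul_of_nonneg_right (Real.le_coe_toNNReal α) (abs_nonneg _))
  have hrank (k : ℕ) : LipschitzWith α.toNNReal fun u => krank M k (Pi.map f u) :=
    one_mul α.toNNReal ▸ (krank_lipschitzWith M k).comp hf
  exact existsUnique_periodic_attractor
    (G := fun n u => (1 / 2 : ℝ) * (krank M 1 (Pi.map f u) - krank M (1 + n % P) (Pi.map f u)))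
    (fun n => by simp only [Nat.add_mod_right]) (fun n => (hrank 1).half_sub (hrank _))
    (Real.toNNReal_lt_one.mpr hα) (hP.trans hPM)
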